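/- arXiv:2009.00130 — 9 statements merged into one kernel-verified Lean document; each statement's English description precedes it below -/
import Mathlib

section
/- Let $G$ be a $K_{k,k}$-free bipartite graph with parts of size $m$ and $n$. Then the number of edges of $G$ is at most $C_k(n m^{1-1/k} + m)$ for some constant $C_k$ depending only on $k$. -/
open Finset

/-- Neighborhood in `A` of a vertex `b` of the second part. -/
def nbrA {α β : Type} [DecidableEq α] (E : α → β → Prop) [∀ a b, Decidable (E a b)]
    (A : Finset α) (b : β) : Finset α := A.filter (fun a => E a b)

/-- Neighborhood in `B` of a vertex `a` of the first part. -/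
def nbrB {α β : Type} [DecidableEq β] (E : α → β → Prop) [∀ a b, Decidable (E a b)]
    (B : Finset β) (a : α) : Finset β := B.filter (fun b => E a b)

/-- Common neighborhood in `B` of a set `T` of vertices of the first part. -/
def commonNbr {α β : Type} [DecidableEq β] (E : α → β → Prop) [∀ a b, Decidable (E a b)]
    (B : Finset β) (T : Finset α) : Finset β := B.filter (fun b => ∀ a ∈ T, E a b)

/-- Number of edges of the bipartite graph with parts `A`, `B` and adjacency `E`. -/
def edgeCount {α β : Type} (E : α → β → Prop) [∀ a b, Decidable (E a b)]
    (A : Finset α) (B : Finset β) : ℕ := ((A ×ˢ B).filter (fun p => E p.1 p.2)).card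

/-- `K_{k,k}`-freeness of the bipartite graph with parts `A`, `B` and adjacency `E`. -/
def KFree {α β : Type} (E : α → β → Prop) (A : Finset α) (B : Finset β) (k : ℕ) : Prop :=
  ¬ ∃ S ⊆ A, ∃ T ⊆ B, S.card = k ∧ T.card = k ∧ ∀ a ∈ S, ∀ b ∈ T, E a b

/-- `Z ⊆ A` is shattered by the neighborhoods of the vertices of `B`. -/
def Shatters {α β : Type} [DecidableEq α] (E : α → β → Prop) [∀ a b, Decidable (E a b)]
    (A : Finset α) (B : Finset β) (Z : Finset α) : Prop :=
  ∀ S ⊆ Z, ∃ b ∈ B, nbrA E A b ∩ Z = S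

/-- The VC-dimension of the bipartite graph `(A,B,E)` with respect to `A` is at most `d`. -/
def VCdimLE {α β : Type} [DecidableEq α] (E : α → β → Prop) [∀ a b, Decidable (E a b)]
    (A : Finset α) (B : Finset β) (d : ℕ) : Prop :=
  ∀ Z ⊆ A, Shatters E A B Z → Z.card ≤ d

/-!
Double counting pairs `(a, T)` with `T` a `k`-subset of the neighbourhood of `a ∈ A`,
`K_{k,k}`-freeness gives `∑ₐ C(dₐ, k) ≤ (k - 1) C(n, k)`. For a threshold `t ≥ k`, a vertex of
degree `d > t` has `d t^(k-1) ≤ d^k ≤ k^k C(d, k)`, so the vertices of degree at most `t` carry at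
most `t m` edges and the others at most `k^(k+1) n^k / t^(k-1)`. The choice
`t = k + n m^(-1/k)` makes both terms `O(n m^(1-1/k) + m)`.
-/

open Finset
open scoped Nat

theorem Nat.pow_le_pow_mul_choose {d k : ℕ} (h : k ≤ d) : d ^ k ≤ k ^ k * d.choose k := by
  -- `d ^ k * k! ≤ k ^ k * d.descFactorial k`, factor by factor
  have hfac : ∀ i ∈ range k, d * (k - i) ≤ (d - i) * k := by
    intro i hi
    have hik : i < k := mem_range.1 hi
    zify [hik.le, hik.le.trans h]
    nlinarith
  have key : d ^ k * k ! ≤ k ^ k * d.choose k * k ! := by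
    calc d ^ k * k ! = ∏ i ∈ range k, d * (k - i) := by
          rw [prod_mul_distrib, prod_const, card_range, ← descFactorial_eq_prod_range,
            descFactorial_self]
      _ ≤ ∏ i ∈ range k, (d - i) * k := prod_le_prod' hfac
      _ = k ^ k * d.choose k * k ! := by
          rw [prod_mul_distrib, prod_const, card_range, ← descFactorial_eq_prod_range,
            descFactorial_eq_factorial_mul_choose]
          ring
  exact Nat.le_of_mul_le_mul_right key (factorial_pos k)

theorem natCast_mul_pow_le_pow_add_choose {k d : ℕ} (hk : 0 < k) {t : ℝ} (ht : (k : ℝ) ≤ t) :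
    (d : ℝ) * t ^ (k - 1) ≤ t ^ k + k ^ k * d.choose k := by
  have hpow : ∀ x : ℝ, x * x ^ (k - 1) = x ^ k := fun x => by
    rw [← pow_succ', Nat.sub_add_cancel hk]
  have ht0 : 0 ≤ t := (Nat.cast_nonneg k).trans ht
  rcases le_or_gt (d : ℝ) t with hdt | htd
  · calc (d : ℝ) * t ^ (k - 1) ≤ t * t ^ (k - 1) := by gcongr
      _ ≤ t ^ k + k ^ k * d.choose k := by rw [hpow]; exact le_add_of_nonneg_right (by positivity)
  · have hkd : k ≤ d := by exact_mod_cast ht.trans htd.le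
    calc (d : ℝ) * t ^ (k - 1) ≤ d * d ^ (k - 1) := by gcongr
      _ = d ^ k := hpow d
      _ ≤ k ^ k * d.choose k := by exact_mod_cast Nat.pow_le_pow_mul_choose hkd
      _ ≤ t ^ k + k ^ k * d.choose k := le_add_of_nonneg_left (by positivity)

section KovariSosTuran

variable {α β : Type} [DecidableEq β] (E : α → β → Prop) [∀ a b, Decidable (E a b)]
  (A : Finset α) (B : Finset β)

theorem edgeCount_eq_sum_card_nbrB : edgeCount E A B = ∑ a ∈ A, (nbrB E B a).card := by
  simp only [edgeCount, nbrB, card_filter, sum_product]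

variable {E A B}

theorem KFree.card_filter_subset_nbrB_lt {k : ℕ} (hfree : KFree E A B k) {T : Finset β}
    (hTB : T ⊆ B) (hT : T.card = k) : (A.filter fun a => T ⊆ nbrB E B a).card < k := by
  by_contra! hbig
  obtain ⟨S, hS, hScard⟩ := exists_subset_card_eq hbig
  refine hfree ⟨S, hS.trans (filter_subset _ _), T, hTB, hScard, hT, fun a ha b hb => ?_⟩
  exact (mem_filter.1 ((mem_filter.1 (hS ha)).2 hb)).2

theorem sum_choose_card_nbrB_le {k : ℕ} (hfree : KFree E A B k) :
    ∑ a ∈ A, (nbrB E B a).card.choose k ≤ (k - 1) * B.card.choose k := by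
  have habove : ∀ a ∈ A,
      ((B.powersetCard k).bipartiteAbove (fun a T => T ⊆ nbrB E B a) a).card =
        (nbrB E B a).card.choose k := by
    intro a _
    rw [← card_powersetCard]
    congr 1
    ext T
    simp only [mem_bipartiteAbove, mem_powersetCard]
    exact ⟨fun ⟨⟨_, hk⟩, hT⟩ => ⟨hT, hk⟩,
      fun ⟨hT, hk⟩ => ⟨⟨hT.trans (filter_subset _ _), hk⟩, hT⟩⟩
  have hbelow : ∀ T ∈ B.powersetCard k,
      (A.bipartiteBelow (fun a T => T ⊆ nbrB E B a) T).card ≤ k - 1 := by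
    intro T hT
    rw [mem_powersetCard] at hT
    exact Nat.le_sub_one_of_lt (hfree.card_filter_subset_nbrB_lt hT.1 hT.2)
  calc ∑ a ∈ A, (nbrB E B a).card.choose k
      = ∑ T ∈ B.powersetCard k, (A.bipartiteBelow (fun a T => T ⊆ nbrB E B a) T).card := by
        rw [← sum_congr rfl habove, sum_card_bipartiteAbove_eq_sum_card_bipartiteBelow]
    _ ≤ (B.powersetCard k).card • (k - 1) := sum_le_card_nsmul _ _ _ hbelow
    _ = (k - 1) * B.card.choose k := by rw [card_powersetCard, smul_eq_mul, mul_comm]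

theorem edgeCount_mul_pow_le {k : ℕ} (hk : 0 < k) (hfree : KFree E A B k) {t : ℝ}
    (ht : (k : ℝ) ≤ t) :
    (edgeCount E A B : ℝ) * t ^ (k - 1) ≤ A.card * t ^ k + k ^ (k + 1) * B.card ^ k := by
  have hchoose : ((∑ a ∈ A, (nbrB E B a).card.choose k : ℕ) : ℝ) ≤ k * B.card ^ k := by
    exact_mod_cast (sum_choose_card_nbrB_le hfree).trans
      (Nat.mul_le_mul (Nat.sub_le k 1) (Nat.choose_le_pow _ _))
  calc (edgeCount E A B : ℝ) * t ^ (k - 1)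
      = ∑ a ∈ A, ((nbrB E B a).card : ℝ) * t ^ (k - 1) := by
        rw [edgeCount_eq_sum_card_nbrB, Nat.cast_sum, sum_mul]
    _ ≤ ∑ a ∈ A, (t ^ k + k ^ k * (nbrB E B a).card.choose k) :=
        sum_le_sum fun a _ => natCast_mul_pow_le_pow_add_choose hk ht
    _ = A.card * t ^ k + k ^ k * ((∑ a ∈ A, (nbrB E B a).card.choose k : ℕ) : ℝ) := by
        rw [sum_add_distrib, sum_const, nsmul_eq_mul, ← mul_sum, Nat.cast_sum]
    _ ≤ A.card * t ^ k + k ^ k * (k * B.card ^ k) := by gcongr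
    _ = A.card * t ^ k + k ^ (k + 1) * B.card ^ k := by ring

theorem edgeCount_le_of_pow_eq_card {k : ℕ} (hk : 0 < k) (hfree : KFree E A B k) {y : ℝ}
    (hy : 0 < y) (hyA : y ^ k = A.card) :
    (edgeCount E A B : ℝ) ≤ (k ^ (k + 1) + k) * (B.card * y ^ (k - 1) + A.card) := by
  obtain ⟨j, rfl⟩ : ∃ j, k = j + 1 := ⟨k - 1, by omega⟩
  set m : ℝ := (A.card : ℝ)
  set n : ℝ := (B.card : ℝ)
  set K : ℝ := ((j + 1 : ℕ) : ℝ) ^ (j + 2)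
  set t : ℝ := (j + 1 : ℕ) + n / y with ht
  have hk_le_t : ((j + 1 : ℕ) : ℝ) ≤ t := le_add_of_nonneg_right (by positivity)
  have htj : 0 < t ^ j := pow_pos (by positivity) j
  have hcore := edgeCount_mul_pow_le hk hfree hk_le_t
  rw [Nat.add_sub_cancel] at hcore ⊢
  have hlight : m * t ^ (j + 1) = ((j + 1 : ℕ) * m + n * y ^ j) * t ^ j := by
    have hmt : m * t = (j + 1 : ℕ) * m + n * y ^ j := by rw [← hyA, ht]; field_simp; ring
    rw [pow_succ, mul_comm (t ^ j), ← mul_assoc, hmt]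
  have hheavy : n ^ (j + 1) ≤ n * y ^ j * t ^ j := by
    have hyt : y * t = (j + 1 : ℕ) * y + n := by rw [ht]; field_simp
    calc n ^ (j + 1) = n * n ^ j := pow_succ' n j
      _ ≤ n * ((j + 1 : ℕ) * y + n) ^ j := by gcongr; exact le_add_of_nonneg_left (by positivity)
      _ = n * y ^ j * t ^ j := by rw [← hyt, mul_pow, mul_assoc]
  have hbound : (edgeCount E A B : ℝ) ≤ (j + 1 : ℕ) * m + (1 + K) * (n * y ^ j) := by
    refine le_of_mul_le_mul_right ?_ htj
    calc (edgeCount E A B : ℝ) * t ^ j ≤ m * t ^ (j + 1) + K * n ^ (j + 1) := hcore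
      _ ≤ ((j + 1 : ℕ) * m + n * y ^ j) * t ^ j + K * (n * y ^ j * t ^ j) := by
          rw [hlight]; gcongr
      _ = ((j + 1 : ℕ) * m + (1 + K) * (n * y ^ j)) * t ^ j := by ring
  have hK : 1 ≤ K := one_le_pow₀ (by simp)
  have hj : (1 : ℝ) ≤ (j + 1 : ℕ) := by simp
  nlinarith [mul_nonneg (sub_nonneg.2 hj) (by positivity : (0 : ℝ) ≤ n * y ^ j),
    mul_nonneg (sub_nonneg.2 hK) (by positivity : (0 : ℝ) ≤ m)]

end KovariSosTuran

/-- Asymmetric Kővári–Sós–Turán theorem: a `K_{k,k}`-free bipartite graph with parts of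
size `m` and `n` has at most `C_k (n m^{1-1/k} + m)` edges. -/
theorem stmt_0 (k : ℕ) (hk : 1 ≤ k) :
    ∃ C : ℝ, 0 < C ∧
      ∀ (α β : Type) [DecidableEq α] [DecidableEq β]
        (E : α → β → Prop) [∀ a b, Decidable (E a b)] (A : Finset α) (B : Finset β)
        (m n : ℕ), A.card = m → B.card = n → KFree E A B k →
        (edgeCount E A B : ℝ) ≤ C * ((n : ℝ) * (m : ℝ) ^ (1 - 1 / (k : ℝ)) + (m : ℝ)) := by
  refine ⟨k ^ (k + 1) + k, add_pos_of_nonneg_of_pos (by positivity) (by exact_mod_cast hk), ?_⟩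
  intro α β _ _ E _ A B m n hm hn hfree
  subst hm hn
  rcases A.eq_empty_or_nonempty with rfl | hA
  · simp only [edgeCount, empty_product, filter_empty, card_empty, CharP.cast_eq_zero]
    positivity
  have hm : (0 : ℝ) < A.card := by exact_mod_cast hA.card_pos
  set y := (A.card : ℝ) ^ (1 / (k : ℝ)) with hy
  have hyA : y ^ k = A.card := by
    rw [hy, one_div]; exact Real.rpow_inv_natCast_pow hm.le (by omega)
  have hz : (A.card : ℝ) ^ (1 - 1 / (k : ℝ)) = y ^ (k - 1) := by
    rw [← Real.rpow_natCast, ← Real.rpow_mul hm.le, Nat.cast_sub hk, Nat.cast_one]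
    congr 1
    field_simp
  rw [hz]
  exact edgeCount_le_of_pow_eq_card hk hfree (by positivity) hyA
end

section
/- Let $G$ be a $K_{k,k}$-free bipartite graph with parts $A$ and $B$, and let $x \in B$ with $|N(x)| \ge \frac{c}{2} n^{1-1/d}$ for constants $c>0$ and integers $k \ge d \ge 2$. Then for all sufficiently large $n$, the number of vertices $y \in B \setminus \{x\}$ with $|N(y) \cap N(x)| \ge |N(x)|/\log n$ is at most $n^{1/100}$. -/
open Finset

open Filter in

lemma ev_facts (c : ℝ) (hc : 0 < c) (k : ℕ) (hk : 1 ≤ k) :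
    ∀ᶠ n : ℕ in atTop, (2:ℝ) ≤ (n:ℝ) ∧
      2*(k:ℝ)*Real.log n ≤ c/2 * (n:ℝ)^((1:ℝ)/2) ∧
      (k:ℝ)*(2*Real.log n)^k ≤ (n:ℝ)^((1:ℝ)/100) := by
  have hk0 : (0:ℝ) < k := by exact_mod_cast hk
  have hcast : Tendsto (fun n : ℕ => (n:ℝ)) atTop atTop := tendsto_natCast_atTop_atTop
  have e1 : ∀ᶠ n : ℕ in atTop, (2:ℝ) ≤ (n:ℝ) := hcast.eventually_ge_atTop 2
  -- second
  have t2 : Tendsto (fun x : ℝ => Real.log x / x ^ ((1:ℝ)/2)) atTop (nhds 0) :=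
    (isLittleO_log_rpow_atTop (by norm_num : (0:ℝ) < 1/2)).tendsto_div_nhds_zero
  have t2' := (t2.comp hcast).eventually_lt_const
    (show (0:ℝ) < c/(8*k) by positivity)
  have e2 : ∀ᶠ n : ℕ in atTop,
      2*(k:ℝ)*Real.log n ≤ c/2 * (n:ℝ)^((1:ℝ)/2) := by
    filter_upwards [t2', e1] with n h1 h2
    have hp : (0:ℝ) < (n:ℝ)^((1:ℝ)/2) := Real.rpow_pos_of_pos (by linarith) _
    have hlog : Real.log n < c/(8*k) * (n:ℝ)^((1:ℝ)/2) := by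
      rw [Function.comp_apply, div_lt_iff₀ hp] at h1
      simpa using h1
    have h8 : 2*(k:ℝ) * (c/(8*k)) = c/4 := by field_simp; ring
    nlinarith [hp.le]
  -- third
  have t3 : Tendsto (fun x : ℝ => Real.log x ^ (k:ℝ) / x ^ ((1:ℝ)/100)) atTop (nhds 0) :=
    (isLittleO_log_rpow_rpow_atTop (k:ℝ) (by norm_num : (0:ℝ) < 1/100)).tendsto_div_nhds_zero
  have t3' := (t3.comp hcast).eventually_lt_const
    (show (0:ℝ) < 1/((k:ℝ)*2^k+1) by positivity)
  have e3 : ∀ᶠ n : ℕ in atTop,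
      (k:ℝ)*(2*Real.log n)^k ≤ (n:ℝ)^((1:ℝ)/100) := by
    filter_upwards [t3', e1] with n h1 h2
    have hp : (0:ℝ) < (n:ℝ)^((1:ℝ)/100) := Real.rpow_pos_of_pos (by linarith) _
    have hl0 : (0:ℝ) ≤ Real.log n := Real.log_nonneg (by linarith)
    have hrw : Real.log (n:ℝ) ^ (k:ℝ) = Real.log (n:ℝ) ^ k := Real.rpow_natCast _ k
    rw [Function.comp_apply, hrw, div_lt_iff₀ hp] at h1
    have hkey : Real.log (n:ℝ) ^ k ≤ 1/((k:ℝ)*2^k+1) * (n:ℝ)^((1:ℝ)/100) := h1.le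
    have hexp : (k:ℝ)*(2*Real.log n)^k = ((k:ℝ)*2^k) * Real.log (n:ℝ)^k := by
      rw [mul_pow]; ring
    rw [hexp]
    have hpos : (0:ℝ) < (k:ℝ)*2^k := by positivity
    have := mul_le_mul_of_nonneg_left hkey hpos.le
    calc ((k:ℝ)*2^k) * Real.log (n:ℝ)^k
        ≤ ((k:ℝ)*2^k) * (1/((k:ℝ)*2^k+1) * (n:ℝ)^((1:ℝ)/100)) := this
      _ ≤ (n:ℝ)^((1:ℝ)/100) := by
          rw [← mul_assoc]
          have : ((k:ℝ)*2^k) * (1/((k:ℝ)*2^k+1)) ≤ 1 := by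
            rw [mul_one_div, div_le_one (by positivity)]; linarith
          nlinarith [hp.le]
  exact e1.and (e2.and e3)

set_option maxHeartbeats 1000000 in
/-- In a `K_{k,k}`-free bipartite graph, if `x ∈ B` has degree at least `(c/2) n^{1-1/d}`,
then for all sufficiently large `n` the number of vertices `y ∈ B \ {x}` with
`|N(y) ∩ N(x)| ≥ |N(x)| / log n` is at most `n^{1/100}`. -/

theorem stmt_3 (c : ℝ) (hc : 0 < c) (k d : ℕ) (hd : 2 ≤ d) (hk : d ≤ k) :
    ∃ n₀ : ℕ, ∀ n ≥ n₀,
      ∀ (α β : Type) [DecidableEq α] [DecidableEq β]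
        (E : α → β → Prop) [∀ a b, Decidable (E a b)] (A : Finset α) (B : Finset β)
        (x : β), x ∈ B → KFree E A B k →
        c / 2 * (n : ℝ) ^ (1 - 1 / (d : ℝ)) ≤ ((nbrA E A x).card : ℝ) →
        (({y : β | y ∈ B ∧ y ≠ x ∧
            ((nbrA E A x).card : ℝ) / Real.log n ≤ ((nbrA E A y ∩ nbrA E A x).card : ℝ)}).ncard : ℝ)
          ≤ (n : ℝ) ^ ((1 : ℝ) / 100) := by
  have hk1' : 1 ≤ k := le_trans (by norm_num) (le_trans hd hk)
  obtain ⟨n₀, hn₀⟩ := Filter.eventually_atTop.mp (ev_facts c hc k hk1')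
  refine ⟨n₀, fun n hn α β _ _ E _ A B x hxB hfree hdeg => ?_⟩
  obtain ⟨h2n, hev2, hev3⟩ := hn₀ n hn
  classical
  set Nx : Finset α := nbrA E A x with hNxdef
  set m : ℕ := Nx.card with hmdef
  have hn1 : (1:ℝ) < (n:ℝ) := by linarith
  have hlogpos : 0 < Real.log n := Real.log_pos hn1
  have hhalf : (n:ℝ)^((1:ℝ)/2) ≤ (n:ℝ)^(1 - 1/(d:ℝ)) := by
    apply Real.rpow_le_rpow_of_exponent_le (by linarith)
    have hd2 : (2:ℝ) ≤ (d:ℝ) := by exact_mod_cast hd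
    have : 1/(d:ℝ) ≤ 1/2 := by
      apply one_div_le_one_div_of_le <;> linarith
    linarith
  have hmlarge : 2*(k:ℝ)*Real.log n ≤ (m:ℝ) := by
    calc 2*(k:ℝ)*Real.log n ≤ c/2 * (n:ℝ)^((1:ℝ)/2) := hev2
      _ ≤ c/2 * (n:ℝ)^(1 - 1/(d:ℝ)) := by
          apply mul_le_mul_of_nonneg_left hhalf; positivity
      _ ≤ (m:ℝ) := hdeg
  have hmpos : (0:ℝ) < (m:ℝ) := by
    have : (0:ℝ) < c/2 * (n:ℝ)^(1 - 1/(d:ℝ)) := by positivity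
    linarith [hdeg]
  set t : ℕ := ⌈(m:ℝ)/Real.log n⌉₊ with htdef
  have ht_ge : (m:ℝ)/Real.log n ≤ (t:ℝ) := Nat.le_ceil _
  have hk1 : 1 ≤ k := le_trans (by norm_num) (le_trans hd hk)
  have ht2kR : 2*(k:ℝ) ≤ (t:ℝ) := by
    have : 2*(k:ℝ) ≤ (m:ℝ)/Real.log n := by
      rw [le_div_iff₀ hlogpos]; linarith
    linarith
  have ht2k : 2*k ≤ t := by exact_mod_cast ht2kR
  -- the finset version of the set
  set Y : Finset β := B.filter (fun y => y ≠ x ∧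
      ((m:ℝ)/Real.log n ≤ ((nbrA E A y ∩ Nx).card : ℝ))) with hYdef
  have hset : {y : β | y ∈ B ∧ y ≠ x ∧
      ((nbrA E A x).card : ℝ) / Real.log n ≤ ((nbrA E A y ∩ nbrA E A x).card : ℝ)} = ↑Y := by
    ext y
    simp only [hYdef, Finset.coe_filter, Set.mem_setOf_eq, hNxdef, hmdef]
  rw [hset, Set.ncard_coe_finset]
  -- counting
  have hYsum : ∀ y ∈ Y, t.choose k ≤
      ((Nx.powersetCard k).filter (fun T => T ⊆ nbrA E A y)).card := by
    intro y hy
    have heq : (Nx.powersetCard k).filter (fun T => T ⊆ nbrA E A y)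
        = (nbrA E A y ∩ Nx).powersetCard k := by
      ext T
      simp only [Finset.mem_filter, Finset.mem_powersetCard, Finset.subset_inter_iff]
      tauto
    rw [heq, Finset.card_powersetCard]
    apply Nat.choose_le_choose
    have := (Finset.mem_filter.1 hy).2.2
    have ht := Nat.ceil_le.2 this
    exact ht
  have hTbd : ∀ T ∈ Nx.powersetCard k,
      (Y.filter (fun y => T ⊆ nbrA E A y)).card ≤ k - 1 := by
    intro T hT
    by_contra hcon
    push_neg at hcon
    have hklecard : k ≤ (Y.filter (fun y => T ⊆ nbrA E A y)).card := by omega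
    obtain ⟨U, hU, hUcard⟩ := Finset.exists_subset_card_eq hklecard
    apply hfree
    obtain ⟨hTsub, hTcard⟩ := Finset.mem_powersetCard.1 hT
    refine ⟨T, ?_, U, ?_, hTcard, hUcard, ?_⟩
    · exact hTsub.trans (Finset.filter_subset _ _)
    · exact hU.trans ((Finset.filter_subset _ _).trans (Finset.filter_subset _ _))
    · intro a ha b hb
      have hb' := hU hb
      rw [Finset.mem_filter] at hb'
      have : a ∈ nbrA E A b := hb'.2 ha
      exact (Finset.mem_filter.1 this).2
  have hswap : ∑ y ∈ Y, ((Nx.powersetCard k).filter (fun T => T ⊆ nbrA E A y)).card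
      = ∑ T ∈ Nx.powersetCard k, (Y.filter (fun y => T ⊆ nbrA E A y)).card := by
    simp_rw [Finset.card_filter]
    exact Finset.sum_comm
  have keyN : Y.card * t.choose k ≤ (k-1) * m.choose k := by
    calc Y.card * t.choose k = ∑ _y ∈ Y, t.choose k := by
          rw [Finset.sum_const, smul_eq_mul]
      _ ≤ ∑ y ∈ Y, ((Nx.powersetCard k).filter (fun T => T ⊆ nbrA E A y)).card :=
          Finset.sum_le_sum hYsum
      _ = ∑ T ∈ Nx.powersetCard k, (Y.filter (fun y => T ⊆ nbrA E A y)).card := hswap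
      _ ≤ ∑ _T ∈ Nx.powersetCard k, (k-1) := Finset.sum_le_sum hTbd
      _ = (Nx.powersetCard k).card * (k-1) := by rw [Finset.sum_const, smul_eq_mul]
      _ = (k-1) * m.choose k := by rw [Finset.card_powersetCard, mul_comm]
  have keyN2 : Y.card * (t+1-k)^k ≤ (k-1) * m^k := by
    calc Y.card * (t+1-k)^k ≤ Y.card * t.descFactorial k :=
          Nat.mul_le_mul_left _ (Nat.pow_sub_le_descFactorial t k)
      _ = Y.card * (k.factorial * t.choose k) := by
          rw [Nat.descFactorial_eq_factorial_mul_choose]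
      _ = (Y.card * t.choose k) * k.factorial := by ring
      _ ≤ ((k-1) * m.choose k) * k.factorial := Nat.mul_le_mul_right _ keyN
      _ = (k-1) * (k.factorial * m.choose k) := by ring
      _ = (k-1) * m.descFactorial k := by rw [Nat.descFactorial_eq_factorial_mul_choose]
      _ ≤ (k-1) * m^k := Nat.mul_le_mul_left _ (Nat.descFactorial_le_pow m k)
  -- to reals
  have hcastsub : ((t+1-k : ℕ):ℝ) = (t:ℝ)+1-(k:ℝ) := by
    have hkle : k ≤ t+1 := by omega
    push_cast [hkle]
    ring
  have hlow : (m:ℝ)/(2*Real.log n) ≤ ((t+1-k:ℕ):ℝ) := by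
    rw [hcastsub]
    have h1 : (m:ℝ)/Real.log n ≤ (t:ℝ) := ht_ge
    have h2 : (m:ℝ)/(2*Real.log n) = ((m:ℝ)/Real.log n)/2 := by
      rw [div_div]; ring_nf
    rw [h2]
    linarith
  have hfrac_pos : (0:ℝ) < (m:ℝ)/(2*Real.log n) := by positivity
  have keyR : (Y.card:ℝ) * ((m:ℝ)/(2*Real.log n))^k ≤ (k:ℝ) * (m:ℝ)^k := by
    have hc1 : ((m:ℝ)/(2*Real.log n))^k ≤ ((t+1-k:ℕ):ℝ)^k :=
      pow_le_pow_left₀ hfrac_pos.le hlow k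
    have hc2 : (Y.card:ℝ) * ((t+1-k:ℕ):ℝ)^k ≤ ((k-1:ℕ):ℝ) * (m:ℝ)^k := by
      exact_mod_cast Nat.cast_le.2 keyN2
    have hc3 : ((k-1:ℕ):ℝ) ≤ (k:ℝ) := by
      exact_mod_cast Nat.cast_le.2 (Nat.sub_le k 1)
    calc (Y.card:ℝ) * ((m:ℝ)/(2*Real.log n))^k
        ≤ (Y.card:ℝ) * ((t+1-k:ℕ):ℝ)^k := by
          apply mul_le_mul_of_nonneg_left hc1 (Nat.cast_nonneg _)
      _ ≤ ((k-1:ℕ):ℝ) * (m:ℝ)^k := hc2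
      _ ≤ (k:ℝ) * (m:ℝ)^k := by
          apply mul_le_mul_of_nonneg_right hc3 (by positivity)
  have hYbound : (Y.card:ℝ) ≤ (k:ℝ) * (2*Real.log n)^k := by
    have hpowpos : (0:ℝ) < ((m:ℝ)/(2*Real.log n))^k := pow_pos hfrac_pos k
    rw [← le_div_iff₀ hpowpos] at keyR
    calc (Y.card:ℝ) ≤ (k:ℝ) * (m:ℝ)^k / ((m:ℝ)/(2*Real.log n))^k := keyR
      _ = (k:ℝ) * (2*Real.log n)^k := by
          rw [div_pow]
          field_simp
  linarith [hev3]
end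

section
/- Let $F$ be a $K_{k,k}$-free bipartite graph with parts $B$ and $Q$ where $|Q| = q$. Suppose there exists $x \in B$ adjacent to every vertex of $Q$, and for every $T \subseteq Q$ with $|T| = d$, the set of common neighbors $N(T)$ satisfies $|N(T)| \ge q$. If $q$ is sufficiently large compared to $d$ and $k$ (with $k \ge d \ge 2$), then there exists $Z \subseteq Q$ with $|Z| = d+1$ such that $Z$ is shattered by the family $\{N(b) : b \in B\}$. -/
open Finset

/-!
Call `b ∈ B` large if it has more than `t = q / c` neighbours in `Q`, for a constant `c` depending
on `d`. Double counting the edges between `Q` and `r` large vertices, and using that no `k`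
vertices of `Q` share `k` neighbours, shows that there are fewer than `r` large vertices, where
`r` depends only on `d` and `k`. As every `S ⊆ Q` with `|S| ≤ d` has at least `q > r` common
neighbours, it has a common neighbour `W S` that is not large. A `(d+1)`-set `Z ⊆ Q` is shattered
(by `x` for `Z` itself) as soon as `Z ∩ N(W S) ⊆ S` for every `S ⊂ Z`, and at most
`(d+1) t q^d < C(q, d+1)` sets `Z` violate this.
-/

open scoped Nat

section

variable {α β : Type} {E : α → β → Prop} [∀ a b, Decidable (E a b)]

section KovariSosTuran

variable {A : Finset α} {B : Finset β} {k : ℕ}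

lemma KFree.card_filter_forall_lt (hfree : KFree E A B k) {U : Finset β} (hU : U ⊆ B)
    (hUk : #U = k) : #{a ∈ A | ∀ b ∈ U, E a b} < k := by
  by_contra! h
  obtain ⟨S, hS, hSk⟩ := exists_subset_card_eq h
  exact hfree ⟨S, hS.trans (filter_subset _ _), U, hU, hSk, hUk,
    fun a ha => (mem_filter.1 (hS ha)).2⟩

lemma KFree.card_filter_le_card_bipartiteAbove_le [DecidableEq α] (hfree : KFree E A B k)
    {L : Finset β} (hL : L ⊆ B) :
    #{a ∈ A | k ≤ #(L.bipartiteAbove E a)} ≤ (k - 1) * (#L).choose k := by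
  calc #{a ∈ A | k ≤ #(L.bipartiteAbove E a)}
      ≤ #((L.powersetCard k).biUnion fun U => {a ∈ A | ∀ b ∈ U, E a b}) := by
        refine card_le_card fun a ha => ?_
        obtain ⟨haA, hak⟩ := mem_filter.1 ha
        obtain ⟨U, hU, hUk⟩ := exists_subset_card_eq hak
        exact mem_biUnion.2 ⟨U, mem_powersetCard.2 ⟨hU.trans (filter_subset _ _), hUk⟩,
          mem_filter.2 ⟨haA, fun b hb => (mem_filter.1 (hU hb)).2⟩⟩
    _ ≤ #(L.powersetCard k) * (k - 1) :=
        card_biUnion_le_card_mul _ _ _ fun U hU =>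
          Nat.le_sub_one_of_lt <| hfree.card_filter_forall_lt
            ((mem_powersetCard.1 hU).1.trans hL) (mem_powersetCard.1 hU).2
    _ = (k - 1) * (#L).choose k := by rw [card_powersetCard, mul_comm]

lemma KFree.sum_card_nbrA_le [DecidableEq α] (hfree : KFree E A B k) {L : Finset β}
    (hL : L ⊆ B) :
    ∑ b ∈ L, #(nbrA E A b) ≤ (k - 1) * (#L).choose k * #L + #A * (k - 1) := by
  have hswap : ∑ b ∈ L, #(nbrA E A b) = ∑ a ∈ A, #(L.bipartiteAbove E a) :=
    (sum_card_bipartiteAbove_eq_sum_card_bipartiteBelow E).symm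
  rw [hswap, ← sum_filter_add_sum_filter_not A (fun a => k ≤ #(L.bipartiteAbove E a))]
  gcongr ?_ + ?_
  · calc _ ≤ #{a ∈ A | k ≤ #(L.bipartiteAbove E a)} * #L :=
          sum_le_card_nsmul _ _ _ fun a _ => card_le_card (filter_subset _ _)
      _ ≤ (k - 1) * (#L).choose k * #L := by
          gcongr; exact hfree.card_filter_le_card_bipartiteAbove_le hL
  · calc _ ≤ #{a ∈ A | ¬ k ≤ #(L.bipartiteAbove E a)} * (k - 1) :=
          sum_le_card_nsmul _ _ _ fun a ha => by have := (mem_filter.1 ha).2; omega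
      _ ≤ #A * (k - 1) := by gcongr; exact filter_subset _ _

lemma KFree.card_filter_lt_card_nbrA_lt [DecidableEq α] (hfree : KFree E A B k) {r t : ℕ}
    (h : (k - 1) * r.choose k * r + #A * (k - 1) < (t + 1) * r) :
    #{b ∈ B | t < #(nbrA E A b)} < r := by
  by_contra! hr
  obtain ⟨L, hL, hLr⟩ := exists_subset_card_eq hr
  have hlow : (t + 1) * r ≤ ∑ b ∈ L, #(nbrA E A b) := by
    rw [← hLr, mul_comm, ← smul_eq_mul]
    exact card_nsmul_le_sum _ _ _ fun b hb => (mem_filter.1 (hL hb)).2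
  have hup := hfree.sum_card_nbrA_le (hL.trans (filter_subset _ _))
  rw [hLr] at hup
  omega

end KovariSosTuran

lemma mul_add_mul_sub_one_lt {K k c q t : ℕ} (hc : 0 < c) (ht : K * (k + 1) ≤ t)
    (hq : q < c * (t + 1)) : K * (c * (k + 1)) + q * (k - 1) < (t + 1) * (c * (k + 1)) := by
  have hK : K * (c * (k + 1)) ≤ t * c := by
    calc K * (c * (k + 1)) = K * (k + 1) * c := by ring
      _ ≤ t * c := by gcongr
  have hq' : q * (k - 1) ≤ c * (t + 1) * (k - 1) := Nat.mul_le_mul_right _ hq.le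
  have hk : c * (t + 1) * (k - 1) + c * (t + 1) ≤ c * (t + 1) * (k + 1) := by
    rw [← Nat.mul_succ]; exact Nat.mul_le_mul_left _ (by omega)
  nlinarith

lemma le_card_commonNbr_of_card_le [DecidableEq β] {Q : Finset α} {B : Finset β} {d m : ℕ}
    (hcomm : ∀ T ⊆ Q, #T = d → m ≤ #(commonNbr E B T)) (hdQ : d ≤ #Q)
    {S : Finset α} (hSQ : S ⊆ Q) (hSd : #S ≤ d) : m ≤ #(commonNbr E B S) := by
  obtain ⟨T, hST, hTQ, hTd⟩ := exists_subsuperset_card_eq hSQ hSd hdQ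
  refine (hcomm T hTQ hTd).trans (card_le_card fun b hb => ?_)
  simp only [commonNbr, mem_filter] at hb ⊢
  exact ⟨hb.1, fun a ha => hb.2 a (hST ha)⟩

lemma exists_mem_commonNbr_card_nbrA_le [DecidableEq α] [DecidableEq β] {Q S : Finset α}
    {B : Finset β} {t : ℕ} (h : #{b ∈ B | t < #(nbrA E Q b)} < #(commonNbr E B S)) :
    ∃ b ∈ commonNbr E B S, #(nbrA E Q b) ≤ t := by
  obtain ⟨b, hbS, hbL⟩ := exists_mem_notMem_of_card_lt_card h
  exact ⟨b, hbS, by simpa [(mem_filter.1 hbS).1] using hbL⟩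

lemma mul_mul_pow_lt_choose_succ {q d t : ℕ} (hq : 2 * d < q)
    (ht : (d + 1) * (d + 1)! * 2 ^ (d + 2) * t ≤ q) :
    (d + 1) * t * q ^ d < q.choose (d + 1) := by
  have hlow : q ^ (d + 1) ≤ 2 ^ (d + 1) * ((d + 1)! * q.choose (d + 1)) :=
    calc q ^ (d + 1) ≤ (2 * (q - d)) ^ (d + 1) := Nat.pow_le_pow_left (by omega) _
      _ = 2 ^ (d + 1) * (q + 1 - (d + 1)) ^ (d + 1) := by
          rw [mul_pow, show q + 1 - (d + 1) = q - d by omega]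
      _ ≤ 2 ^ (d + 1) * q.descFactorial (d + 1) := by
          gcongr; exact Nat.pow_sub_le_descFactorial _ _
      _ = 2 ^ (d + 1) * ((d + 1)! * q.choose (d + 1)) := by
          rw [Nat.descFactorial_eq_factorial_mul_choose]
  have hup : 2 * (2 ^ (d + 1) * (d + 1)! * ((d + 1) * t * q ^ d)) ≤ q ^ (d + 1) :=
    calc _ = (d + 1) * (d + 1)! * 2 ^ (d + 2) * t * q ^ d := by ring
      _ ≤ q * q ^ d := by gcongr
      _ = q ^ (d + 1) := by ring
  have hpos : 0 < q ^ (d + 1) := pow_pos (by omega) _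
  refine Nat.lt_of_mul_lt_mul_left (a := 2 ^ (d + 1) * (d + 1)!) ?_
  nlinarith

lemma card_filter_powersetCard_insert_subset_le [DecidableEq α] {Q S : Finset α} {w : α}
    {n : ℕ} (hS : S ⊆ Q) (hwQ : w ∈ Q) (hwS : w ∉ S) :
    #{Z ∈ Q.powersetCard (n + 1) | insert w S ⊆ Z} ≤ #Q ^ (n - #S) := by
  by_cases hSn : #S ≤ n
  · rw [card_filter_powersetCard_subset _ _ _ (insert_subset hwQ hS)
      (by rw [card_insert_of_notMem hwS]; omega), card_insert_of_notMem hwS]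
    calc _ ≤ (#Q - (#S + 1)) ^ (n + 1 - (#S + 1)) := Nat.choose_le_pow _ _
      _ ≤ #Q ^ (n - #S) := by rw [show n + 1 - (#S + 1) = n - #S by omega]; gcongr; omega
  · refine (card_eq_zero.2 (filter_eq_empty_iff.2 fun Z hZ hwSZ => ?_)).trans_le (Nat.zero_le _)
    have := card_le_card hwSZ
    rw [card_insert_of_notMem hwS, (mem_powersetCard.1 hZ).2] at this
    omega

lemma exists_subset_card_eq_forall_inter_subset [DecidableEq α] (Q : Finset α) (d t : ℕ)
    (N : Finset α → Finset α) (hN : ∀ S ⊆ Q, #S ≤ d → #(N S) ≤ t)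
    (hcount : (d + 1) * t * #Q ^ d < (#Q).choose (d + 1)) :
    ∃ Z ⊆ Q, #Z = d + 1 ∧ ∀ S ⊆ Z, #S ≤ d → Z ∩ N S ⊆ S := by
  set bad := {Z ∈ Q.powersetCard (d + 1) | ∃ S ⊆ Z, #S ≤ d ∧ ¬ Z ∩ N S ⊆ S}
  have hbad : bad ⊆ (range (d + 1)).biUnion fun s => (Q.powersetCard s).biUnion fun S =>
      ((Q ∩ N S) \ S).biUnion fun w => {Z ∈ Q.powersetCard (d + 1) | insert w S ⊆ Z} := by
    intro Z hZ
    obtain ⟨hZQ, S, hSZ, hSd, hZS⟩ := mem_filter.1 hZ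
    obtain ⟨w, hwZN, hwS⟩ := not_subset.1 hZS
    obtain ⟨hwZ, hwN⟩ := mem_inter.1 hwZN
    have hZQ' := (mem_powersetCard.1 hZQ).1
    simp only [mem_biUnion, mem_range, mem_powersetCard, mem_filter, mem_sdiff, mem_inter]
    exact ⟨#S, by omega, S, ⟨hSZ.trans hZQ', rfl⟩, w, ⟨⟨hZQ' hwZ, hwN⟩, hwS⟩,
      mem_powersetCard.1 hZQ, insert_subset hwZ hSZ⟩
  have hcard : #bad ≤ (d + 1) * (t * #Q ^ d) := by
    refine (card_le_card hbad).trans ?_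
    refine (card_biUnion_le_card_mul _ _ _ fun s hs => ?_).trans_eq (by rw [card_range])
    have hsd : s ≤ d := by rw [mem_range] at hs; omega
    calc _ ≤ #(Q.powersetCard s) * (t * #Q ^ (d - s)) := by
          refine card_biUnion_le_card_mul _ _ _ fun S hS => ?_
          obtain ⟨hSQ, rfl⟩ := mem_powersetCard.1 hS
          calc _ ≤ #((Q ∩ N S) \ S) * #Q ^ (d - #S) :=
                card_biUnion_le_card_mul _ _ _ fun w hw =>
                  card_filter_powersetCard_insert_subset_le hSQ
                    (mem_inter.1 (mem_sdiff.1 hw).1).1 (mem_sdiff.1 hw).2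
            _ ≤ t * #Q ^ (d - #S) := by
                gcongr
                exact (card_le_card (sdiff_subset.trans inter_subset_right)).trans (hN S hSQ hsd)
      _ ≤ #Q ^ s * (t * #Q ^ (d - s)) := by
          rw [card_powersetCard]; gcongr; exact Nat.choose_le_pow _ _
      _ = t * #Q ^ d := by rw [mul_left_comm, ← pow_add, Nat.add_sub_cancel' hsd]
  obtain ⟨Z, hZ, hZbad⟩ : ∃ Z ∈ Q.powersetCard (d + 1), Z ∉ bad := by
    by_contra! h
    have := card_le_card (show Q.powersetCard (d + 1) ⊆ bad from fun Z hZ => h Z hZ)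
    rw [card_powersetCard] at this
    linarith
  obtain ⟨hZQ, hZd⟩ := mem_powersetCard.1 hZ
  refine ⟨Z, hZQ, hZd, fun S hSZ hSd => ?_⟩
  by_contra hS
  exact hZbad (mem_filter.2 ⟨hZ, S, hSZ, hSd, hS⟩)

lemma shatters_of_forall_ssubset [DecidableEq α] [DecidableEq β] {A Z : Finset α}
    {B : Finset β} (hZA : Z ⊆ A) {x : β} (hx : x ∈ B) (hxZ : ∀ a ∈ Z, E a x)
    (hS : ∀ S ⊂ Z, ∃ b ∈ commonNbr E B S, Z ∩ nbrA E A b ⊆ S) : Shatters E A B Z := by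
  intro S hSZ
  rcases hSZ.eq_or_ssubset with rfl | hSZ
  · refine ⟨x, hx, inter_eq_right.2 fun a ha => ?_⟩
    exact mem_filter.2 ⟨hZA ha, hxZ a ha⟩
  · obtain ⟨b, hb, hbS⟩ := hS S hSZ
    obtain ⟨hbB, hbS'⟩ := mem_filter.1 hb
    refine ⟨b, hbB, Subset.antisymm (by rw [inter_comm]; exact hbS) fun a ha => ?_⟩
    exact mem_inter.2 ⟨mem_filter.2 ⟨hZA (hSZ.subset ha), hbS' a ha⟩, hSZ.subset ha⟩

end

theorem stmt_4_general (k d : ℕ) :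
    ∃ q₀ : ℕ, ∀ q ≥ q₀,
      ∀ (α β : Type) [DecidableEq α] [DecidableEq β]
        (E : α → β → Prop) [∀ a b, Decidable (E a b)] (Q : Finset α) (B : Finset β)
        (x : β), x ∈ B → Q.card = q → KFree E Q B k →
        (∀ a ∈ Q, E a x) →
        (∀ T ⊆ Q, T.card = d → q ≤ (commonNbr E B T).card) →
        ∃ Z ⊆ Q, Z.card = d + 1 ∧ Shatters E Q B Z := by
  set c := (d + 1) * (d + 1)! * 2 ^ (d + 2)
  set r := c * (k + 1)
  refine ⟨c * ((k - 1) * r.choose k * (k + 1)) + r + 2 * d + 1, ?_⟩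
  intro q hq α β _ _ E _ Q B x hx hQ hfree hxQ hcomm
  have hc : 0 < c := by positivity
  set t := q / c
  have hLarge : #{b ∈ B | t < #(nbrA E Q b)} < r := by
    refine hfree.card_filter_lt_card_nbrA_lt ?_
    rw [hQ]
    exact mul_add_mul_sub_one_lt hc ((Nat.le_div_iff_mul_le hc).2 (by linarith))
      (Nat.lt_mul_div_succ q hc)
  have hW : ∀ S, S ⊆ Q → #S ≤ d → ∃ b ∈ commonNbr E B S, #(nbrA E Q b) ≤ t :=
    fun S hSQ hSd => exists_mem_commonNbr_card_nbrA_le <| hLarge.trans_le <| by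
      have := le_card_commonNbr_of_card_le hcomm (by omega) hSQ hSd
      omega
  have : Nonempty β := ⟨x⟩
  choose! W hW using hW
  obtain ⟨Z, hZQ, hZd, hZW⟩ := exists_subset_card_eq_forall_inter_subset Q d t
    (fun S => nbrA E Q (W S)) (fun S hSQ hSd => (hW S hSQ hSd).2)
    (mul_mul_pow_lt_choose_succ (by omega) (by rw [hQ]; exact Nat.mul_div_le q c))
  refine ⟨Z, hZQ, hZd, shatters_of_forall_ssubset hZQ hx (fun a ha => hxQ a (hZQ ha)) ?_⟩
  intro S hSZ
  have hSd : #S ≤ d := by have := card_lt_card hSZ; omega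
  exact ⟨W S, (hW S (hSZ.subset.trans hZQ) hSd).1, hZW S hSZ.subset hSd⟩

/-- If `F` is `K_{k,k}`-free with parts `B` and `Q`, `|Q| = q`, some `x ∈ B` is adjacent to
all of `Q`, and every `d`-subset of `Q` has at least `q` common neighbors, then for `q`
sufficiently large (in terms of `d` and `k`) some `(d+1)`-subset of `Q` is shattered. -/
theorem stmt_4 (k d : ℕ) (hd : 2 ≤ d) (hk : d ≤ k) :
    ∃ q₀ : ℕ, ∀ q ≥ q₀,
      ∀ (α β : Type) [DecidableEq α] [DecidableEq β]
        (E : α → β → Prop) [∀ a b, Decidable (E a b)] (Q : Finset α) (B : Finset β)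
        (x : β), x ∈ B → Q.card = q → KFree E Q B k →
        (∀ a ∈ Q, E a x) →
        (∀ T ⊆ Q, T.card = d → q ≤ (commonNbr E B T).card) →
        ∃ Z ⊆ Q, Z.card = d + 1 ∧ Shatters E Q B Z :=
  stmt_4_general k d
end

section
/- Let $F$ be a $K_{k,k}$-free bipartite graph with parts $Q$ and $B'$, where $|B'| \ge q$ and $q$ is sufficiently large compared to $d$ and $k$. Then the number of vertices $y \in Q$ that are adjacent to at least $\frac{1}{d+1}|B'|$ vertices of $B'$ is bounded by a constant $f(d,k)$ depending only on $d$ and $k$. -/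
open Finset

lemma aux5 {α β : Type} [DecidableEq α] [DecidableEq β] (E : α → β → Prop)
    [∀ a b, Decidable (E a b)] (d k : ℕ) (B' : Finset β) (Y : Finset α)
    (hm : 2 * (d + 1) * k ≤ B'.card)
    (hY : ∀ y ∈ Y, B'.card ≤ (d + 1) * (nbrB E B' y).card) :
    ∀ j ≤ k, ∃ T ⊆ B', T.card = j ∧
      Y.card ≤ (2 * (d + 1)) ^ j * (Y.filter (fun y => ∀ b ∈ T, E y b)).card := by
  intro j
  induction j with
  | zero =>
    intro _
    refine ⟨∅, empty_subset _, card_empty, ?_⟩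
    rw [pow_zero, one_mul, filter_true_of_mem (by simp)]
  | succ j ih =>
    intro hj
    obtain ⟨T, hTB, hTcard, hle⟩ := ih (by omega)
    have hk1 : 1 ≤ k := by omega
    have h2k : 2 * k ≤ 2 * (d + 1) * k := by nlinarith
    have hmge : 2 * k ≤ B'.card := le_trans h2k hm
    set D := 2 * (d + 1) with hD
    set m := B'.card with hmdef
    set Yj := Y.filter (fun y => ∀ b ∈ T, E y b) with hYj
    have hmpos : 0 < m := by omega
    -- B' \ T nonempty
    have hBT : (B' \ T).Nonempty := by
      rw [← card_pos, card_sdiff_of_subset hTB]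
      omega
    -- each y in Yj has large degree into B' \ T
    have hdeg : ∀ y ∈ Yj, m ≤ D * ((B' \ T).filter (fun b => E y b)).card := by
      intro y hy
      have hyY : y ∈ Y := mem_filter.mp hy |>.1
      have h1 : m ≤ (d + 1) * (nbrB E B' y).card := hY y hyY
      have hsub : (nbrB E B' y) \ T ⊆ (B' \ T).filter (fun b => E y b) := by
        intro b hb
        simp only [nbrB, mem_sdiff, mem_filter] at hb ⊢
        tauto
      have h2 : (nbrB E B' y).card - j ≤ ((B' \ T).filter (fun b => E y b)).card := by
        calc (nbrB E B' y).card - j = (nbrB E B' y).card - T.card := by rw [hTcard]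
          _ ≤ ((nbrB E B' y) \ T).card := le_card_sdiff _ _
          _ ≤ _ := card_le_card hsub
      have h3 : D * ((nbrB E B' y).card - j) ≤ D * ((B' \ T).filter (fun b => E y b)).card :=
        Nat.mul_le_mul_left D h2
      have h4 : D * ((nbrB E B' y).card - j) = D * (nbrB E B' y).card - D * j :=
        Nat.mul_sub D _ _
      have h5 : D * j ≤ D * k := Nat.mul_le_mul_left D (by omega)
      have h6 : D * k = 2 * (d + 1) * k := rfl
      have h7 : D * (nbrB E B' y).card = 2 * ((d + 1) * (nbrB E B' y).card) := by
        rw [hD]; ring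
      omega
    -- double counting
    have hcount : Yj.card * m ≤ D * ∑ b ∈ B' \ T, (Yj.filter (fun y => E y b)).card := by
      have e1 : ∑ y ∈ Yj, ((B' \ T).filter (fun b => E y b)).card
          = ∑ b ∈ B' \ T, (Yj.filter (fun y => E y b)).card := by
        simp only [card_filter]
        exact Finset.sum_comm
      have e2 := card_nsmul_le_sum Yj (fun y => D * ((B' \ T).filter (fun b => E y b)).card)
        m hdeg
      simp only [smul_eq_mul] at e2
      calc Yj.card * m ≤ ∑ y ∈ Yj, D * ((B' \ T).filter (fun b => E y b)).card := e2
        _ = D * ∑ y ∈ Yj, ((B' \ T).filter (fun b => E y b)).card := by rw [mul_sum]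
        _ = _ := by rw [e1]
    -- pigeonhole: argmax
    obtain ⟨b, hbBT, hbmax⟩ := (B' \ T).exists_max_image
      (fun b => (Yj.filter (fun y => E y b)).card) hBT
    have hsum : ∑ b' ∈ B' \ T, (Yj.filter (fun y => E y b')).card
        ≤ m * (Yj.filter (fun y => E y b)).card := by
      have e3 := sum_le_card_nsmul (B' \ T) (fun b' => (Yj.filter (fun y => E y b')).card)
        ((Yj.filter (fun y => E y b)).card) hbmax
      simp only [smul_eq_mul] at e3
      calc _ ≤ (B' \ T).card * (Yj.filter (fun y => E y b)).card := e3
        _ ≤ m * _ := Nat.mul_le_mul_right _ (card_le_card (sdiff_subset))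
    have hkey : Yj.card ≤ D * (Yj.filter (fun y => E y b)).card := by
      have hh : Yj.card * m ≤ (D * (Yj.filter (fun y => E y b)).card) * m := by
        calc Yj.card * m ≤ D * ∑ b' ∈ B' \ T, (Yj.filter (fun y => E y b')).card := hcount
          _ ≤ D * (m * (Yj.filter (fun y => E y b)).card) := Nat.mul_le_mul_left D hsum
          _ = (D * (Yj.filter (fun y => E y b)).card) * m := by ring
      exact Nat.le_of_mul_le_mul_right hh hmpos
    have hbB : b ∈ B' := (mem_sdiff.mp hbBT).1
    have hbT : b ∉ T := (mem_sdiff.mp hbBT).2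
    refine ⟨insert b T, insert_subset hbB hTB, by rw [card_insert_of_notMem hbT, hTcard], ?_⟩
    have hfe : Y.filter (fun y => ∀ b' ∈ insert b T, E y b') = Yj.filter (fun y => E y b) := by
      rw [hYj, filter_filter]
      apply filter_congr
      intro y _
      simp [forall_mem_insert, and_comm]
    rw [hfe]
    calc Y.card ≤ D ^ j * Yj.card := hle
      _ ≤ D ^ j * (D * (Yj.filter (fun y => E y b)).card) := Nat.mul_le_mul_left _ hkey
      _ = D ^ (j + 1) * (Yj.filter (fun y => E y b)).card := by ring

/-- In a `K_{k,k}`-free bipartite graph with parts `Q` and `B'`, `|B'| ≥ q`, with `q`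
sufficiently large in terms of `d` and `k`, the number of vertices of `Q` adjacent to at
least `|B'|/(d+1)` vertices of `B'` is at most a constant `f(d,k)`. -/
theorem stmt_5 (d k : ℕ) :
    ∃ (q₀ C : ℕ), ∀ q ≥ q₀,
      ∀ (α β : Type) [DecidableEq α] [DecidableEq β]
        (E : α → β → Prop) [∀ a b, Decidable (E a b)] (Q : Finset α) (B' : Finset β),
        q ≤ B'.card → KFree E Q B' k →
        (Q.filter (fun y => B'.card ≤ (d + 1) * (nbrB E B' y).card)).card ≤ C := by
  refine ⟨2 * (d + 1) * k, (k - 1) * (2 * (d + 1)) ^ k, ?_⟩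
  intro q hq α β _ _ E _ Q B' hqB hfree
  by_contra hcon
  push_neg at hcon
  set Y := Q.filter (fun y => B'.card ≤ (d + 1) * (nbrB E B' y).card) with hYdef
  have hm : 2 * (d + 1) * k ≤ B'.card := le_trans hq hqB
  have hY : ∀ y ∈ Y, B'.card ≤ (d + 1) * (nbrB E B' y).card :=
    fun y hy => (mem_filter.mp hy).2
  obtain ⟨T, hTB, hTcard, hle⟩ := aux5 E d k B' Y hm hY k le_rfl
  set Yk := Y.filter (fun y => ∀ b ∈ T, E y b) with hYk
  have hpow : 0 < (2 * (d + 1)) ^ k := pow_pos (by omega) k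
  have hYkcard : k ≤ Yk.card := by
    by_contra h
    push_neg at h
    have h1 : Yk.card ≤ k - 1 := by omega
    have h2 : Y.card ≤ (k - 1) * (2 * (d + 1)) ^ k := by
      calc Y.card ≤ (2 * (d + 1)) ^ k * Yk.card := hle
        _ ≤ (2 * (d + 1)) ^ k * (k - 1) := Nat.mul_le_mul_left _ h1
        _ = (k - 1) * (2 * (d + 1)) ^ k := mul_comm _ _
    omega
  obtain ⟨S, hSYk, hScard⟩ := Yk.exists_subset_card_eq hYkcard
  apply hfree
  refine ⟨S, ?_, T, hTB, hScard, hTcard, ?_⟩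
  · exact hSYk.trans ((filter_subset _ _).trans (filter_subset _ _))
  · intro a ha b hb
    exact (mem_filter.mp (hSYk ha)).2 b hb
end

section
/- Let $Q$ be a finite set with $|Q| = q$, let $d \ge 1$, and let $B$ be a set such that $Q$ and $B$ are the two parts of a bipartite graph; for $S \subseteq Q$ let $N(S) \subseteq B$ denote the common neighborhood of $S$. Suppose a set $Z \subseteq Q$ of size $d+1$ has the property that for every $S \subsetneq Z$ with $|S| \le d$ and every $z \in Z \setminus S$, the number of elements of $N(S)$ adjacent to $z$ is less than $\frac{1}{d+1}|N(S)|$, and furthermore $N(Z) \ne \emptyset$. Then $Z$ is shattered by the family $\{N(b) : b \in B\}$. -/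
open Finset

/-- If `Z` has `d+1` elements, `N(Z) ≠ ∅`, and for every proper subset `S ⊊ Z` and every
`z ∈ Z \ S` fewer than `|N(S)|/(d+1)` elements of `N(S)` are adjacent to `z`, then `Z` is
shattered by the neighborhoods of the vertices of `B`. -/
theorem stmt_6 {α β : Type} [DecidableEq α] [DecidableEq β]
    (E : α → β → Prop) [∀ a b, Decidable (E a b)] (A : Finset α) (B : Finset β)
    (d q : ℕ) (hd : 1 ≤ d) (Q : Finset α) (hQA : Q ⊆ A) (hq : Q.card = q)
    (Z : Finset α) (hZQ : Z ⊆ Q) (hZ : Z.card = d + 1)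
    (hsmall : ∀ S ⊆ Z, S ≠ Z → ∀ z ∈ Z, z ∉ S →
      (d + 1) * (((commonNbr E B S).filter (fun b => E z b)).card) < (commonNbr E B S).card)
    (hne : (commonNbr E B Z).Nonempty) :
    Shatters E A B Z := by
  have hZA : Z ⊆ A := hZQ.trans hQA
  intro S hSZ
  by_cases hS : S = Z
  · obtain ⟨b, hb⟩ := hne
    simp only [commonNbr, mem_filter] at hb
    refine ⟨b, hb.1, ?_⟩
    rw [hS, inter_eq_right]
    intro a ha
    simp only [nbrA, mem_filter]
    exact ⟨hZA ha, hb.2 a ha⟩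
  · set N := commonNbr E B S with hN
    set bad := N.filter (fun b => ∃ z ∈ Z \ S, E z b) with hbad
    have hsub : bad ⊆ (Z \ S).biUnion (fun z => N.filter (fun b => E z b)) := by
      intro b hb
      simp only [hbad, mem_filter, mem_biUnion] at hb ⊢
      obtain ⟨hbN, z, hz, hEz⟩ := hb
      exact ⟨z, hz, hbN, hEz⟩
    have hZSne : (Z \ S).Nonempty := by
      rw [sdiff_nonempty]
      intro h
      exact hS (subset_antisymm hSZ h)
    have hsum : ∑ z ∈ Z \ S, ((d + 1) * (N.filter (fun b => E z b)).card) <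
        ∑ z ∈ Z \ S, N.card := by
      refine Finset.sum_lt_sum_of_nonempty hZSne ?_
      intro z hz
      rw [mem_sdiff] at hz
      exact hsmall S hSZ hS z hz.1 hz.2
    have hcardZS : (Z \ S).card ≤ d + 1 := by
      calc (Z \ S).card ≤ Z.card := card_le_card sdiff_subset
      _ = d + 1 := hZ
    have hlt : (d + 1) * bad.card < (d + 1) * N.card := by
      calc (d + 1) * bad.card ≤ (d + 1) * ((Z \ S).biUnion
              (fun z => N.filter (fun b => E z b))).card :=
            Nat.mul_le_mul_left _ (card_le_card hsub)
        _ ≤ (d + 1) * ∑ z ∈ Z \ S, (N.filter (fun b => E z b)).card :=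
            Nat.mul_le_mul_left _ card_biUnion_le
        _ = ∑ z ∈ Z \ S, ((d + 1) * (N.filter (fun b => E z b)).card) := by
            rw [Finset.mul_sum]
        _ < ∑ z ∈ Z \ S, N.card := hsum
        _ = (Z \ S).card * N.card := by rw [Finset.sum_const, smul_eq_mul]
        _ ≤ (d + 1) * N.card := Nat.mul_le_mul_right _ hcardZS
    have hbadlt : bad.card < N.card := lt_of_mul_lt_mul_left hlt (Nat.zero_le _)
    have hdiff : (N \ bad).Nonempty := by
      rw [← Finset.card_pos, Finset.card_sdiff_of_subset (filter_subset _ _), ← hbad]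
      omega
    obtain ⟨b, hbmem⟩ := hdiff
    rw [mem_sdiff] at hbmem
    obtain ⟨hbN, hbbad⟩ := hbmem
    simp only [hN, commonNbr, mem_filter] at hbN
    have hnoz : ∀ z ∈ Z, z ∉ S → ¬ E z b := by
      intro z hz hzS hE
      exact hbbad (by
        simp only [hbad, mem_filter, mem_sdiff]
        exact ⟨by simp only [hN, commonNbr, mem_filter]; exact hbN, z, ⟨hz, hzS⟩, hE⟩)
    refine ⟨b, hbN.1, ?_⟩
    ext a
    simp only [nbrA, mem_inter, mem_filter]
    constructor
    · rintro ⟨⟨-, hEab⟩, haZ⟩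
      by_contra haS
      exact hnoz a haZ haS hEab
    · intro haS
      exact ⟨⟨hZA (hSZ haS), hbN.2 a haS⟩, hSZ haS⟩
end

section
/- Let $d \ge 3$ and $c > 0$. Let $G$ be a bipartite graph with parts $A$ and $B$, $|A|, |B| \le n/2$, minimum degree $\delta \ge c n^{1-1/d}$, and let $x \in B$. Then $\sum_{y \in B \setminus \{x\}} \binom{|N(x) \cap N(y)|}{d} \ge c' \cdot |N(x)|^d$ for some constant $c' > 0$ depending only on $c$ and $d$, for all sufficiently large $n$. -/
/-! Double counting the edges between `N(x)` and `B` gives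
`∑_{y ≠ x} |N(x) ∩ N(y)| ≥ |N(x)| (δ - 1)`. Since `d! C(m, d) ≥ (m + 1 - d)^d`, Jensen's
inequality for `t ↦ t^d` over the at most `n/2` vertices `y` bounds `d! ∑_y C(|N(x) ∩ N(y)|, d)`
below by `(|N(x)| δ / 2)^d / (n/2)^(d-1)`, and `δ^d ≥ c^d n^(d-1)` finishes. The additive
losses are affordable because `δ² ≥ c² n^(2-2/d)` outgrows `n` when `d ≥ 3`. -/

open Finset

open Filter Nat

lemma card_mul_le_sum_card_inter_nbrA {α β : Type} [DecidableEq α] [DecidableEq β]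
    (E : α → β → Prop) [∀ a b, Decidable (E a b)] {A N : Finset α} (B : Finset β) {δ : ℕ}
    (hN : N ⊆ A) (hdeg : ∀ a ∈ A, δ ≤ (nbrB E B a).card) :
    N.card * δ ≤ ∑ y ∈ B, (N ∩ nbrA E A y).card := by
  have hinter (y : β) : N ∩ nbrA E A y = N.bipartiteBelow E y := by
    rw [nbrA, inter_filter, inter_eq_left.2 hN, bipartiteBelow]
  calc N.card * δ = ∑ _a ∈ N, δ := by rw [sum_const, smul_eq_mul]
    _ ≤ ∑ a ∈ N, (B.bipartiteAbove E a).card := sum_le_sum fun a ha => hdeg a (hN ha)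
    _ = ∑ y ∈ B, (N ∩ nbrA E A y).card := by
      simp only [hinter, sum_card_bipartiteAbove_eq_sum_card_bipartiteBelow]

lemma pow_le_card_pow_mul_sum_choose {ι : Type*} (s : Finset ι) (g : ι → ℕ) {d : ℕ}
    (hd : 0 < d) {X : ℝ} (hX : 0 ≤ X) (hXs : X ≤ ∑ i ∈ s, (g i : ℝ) - d * s.card) :
    X ^ d ≤ (s.card : ℝ) ^ (d - 1) * (d ! * ∑ i ∈ s, ((g i).choose d : ℝ)) := by
  set f : ι → ℝ := fun i => ((g i + 1 - d : ℕ) : ℝ)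
  have hf_ge (i : ι) : (g i : ℝ) - d ≤ f i := by
    have : (g i : ℝ) ≤ ((g i + 1 - d : ℕ) : ℝ) + d := by
      exact_mod_cast (by omega : g i ≤ (g i + 1 - d) + d)
    linarith
  have hf_pow (i : ι) : f i ^ d ≤ d ! * ((g i).choose d : ℝ) := by
    rw [← div_le_iff₀' (by positivity)]
    exact Nat.pow_le_choose d (g i)
  have hXf : X ≤ ∑ i ∈ s, f i := by
    refine hXs.trans ?_
    have := sum_le_sum fun i (_ : i ∈ s) => hf_ge i
    rwa [sum_sub_distrib, sum_const, nsmul_eq_mul, mul_comm] at this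
  obtain ⟨k, rfl⟩ : ∃ k, d = k + 1 := ⟨d - 1, by omega⟩
  calc X ^ (k + 1) ≤ (∑ i ∈ s, f i) ^ (k + 1) := pow_le_pow_left₀ hX hXf _
    _ ≤ (s.card : ℝ) ^ k * ∑ i ∈ s, f i ^ (k + 1) :=
      pow_sum_le_card_mul_sum_pow (fun i _ => Nat.cast_nonneg _) k
    _ ≤ _ := by
      rw [Nat.add_sub_cancel]
      gcongr _ * ?_
      rw [mul_sum]
      exact sum_le_sum fun i _ => hf_pow i

lemma rpow_one_sub_inv_pow {x : ℝ} (hx : 0 ≤ x) {d : ℕ} (hd : 0 < d) :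
    (x ^ (1 - 1 / (d : ℝ))) ^ d = x ^ (d - 1) := by
  rw [← Real.rpow_natCast _ d, ← Real.rpow_mul hx, ← Real.rpow_natCast x (d - 1),
    Nat.cast_sub hd]
  congr 1
  field_simp
  norm_num

lemma eventually_mul_le_sq_rpow {d : ℕ} (hd : 2 < d) {c : ℝ} (hc : 0 < c) (K : ℝ) :
    ∀ᶠ n : ℕ in atTop, K * n ≤ (c * (n : ℝ) ^ (1 - 1 / (d : ℝ))) ^ 2 := by
  have hexp : 0 < 1 - 2 / (d : ℝ) := by
    have : (2 : ℝ) < d := by exact_mod_cast hd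
    rw [sub_pos, div_lt_one (by linarith)]
    exact this
  have hlarge : ∀ᶠ n : ℕ in atTop, K / c ^ 2 ≤ (n : ℝ) ^ (1 - 2 / (d : ℝ)) :=
    ((tendsto_rpow_atTop hexp).comp tendsto_natCast_atTop_atTop).eventually_ge_atTop _
  filter_upwards [hlarge, eventually_gt_atTop 0] with n hn hn0
  have hn0' : (0 : ℝ) < n := by exact_mod_cast hn0
  have hsplit : (c * (n : ℝ) ^ (1 - 1 / (d : ℝ))) ^ 2 = c ^ 2 * n * n ^ (1 - 2 / (d : ℝ)) := by
    rw [mul_pow, ← Real.rpow_natCast (_ ^ _) 2, ← Real.rpow_mul hn0'.le, mul_assoc,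
      ← Real.rpow_one_add' hn0'.le (by linarith)]
    congr 2
    ring
  rw [div_le_iff₀' (by positivity)] at hn
  rw [hsplit]
  nlinarith

lemma pow_card_nbrA_mul_le_sum_choose_inter {α β : Type} [DecidableEq α] [DecidableEq β]
    (E : α → β → Prop) [∀ a b, Decidable (E a b)] {A : Finset α} {B : Finset β} {d δ : ℕ}
    {n : ℝ} (hd : 0 < d) (hA : (A.card : ℝ) ≤ n / 2) (hB : (B.card : ℝ) ≤ n / 2)
    (hδ : (d + 1) * n ≤ (δ : ℝ) ^ 2)
    (hdegA : ∀ a ∈ A, δ ≤ (nbrB E B a).card) (hdegB : ∀ b ∈ B, δ ≤ (nbrA E A b).card)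
    {x : β} (hx : x ∈ B) :
    ((nbrA E A x).card * δ / 2 : ℝ) ^ d ≤ (n / 2) ^ (d - 1) *
      (d ! * ∑ y ∈ B.erase x, (((nbrA E A x ∩ nbrA E A y).card.choose d : ℕ) : ℝ)) := by
  set N := nbrA E A x
  have hNA : N ⊆ A := filter_subset _ _
  have hNn : (N.card : ℝ) ≤ n / 2 := le_trans (by exact_mod_cast card_le_card hNA) hA
  have htn : ((B.erase x).card : ℝ) ≤ n / 2 := le_trans (by exact_mod_cast card_erase_le) hB
  have hδN : (δ : ℝ) ≤ N.card := by exact_mod_cast hdegB x hx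
  have hedges : (N.card * δ : ℝ) ≤ ∑ y ∈ B.erase x, ((N ∩ nbrA E A y).card : ℝ) + N.card := by
    have := card_mul_le_sum_card_inter_nbrA E B hNA hdegA
    rw [← sum_erase_add _ _ hx, inter_self] at this
    exact_mod_cast this
  -- the `d` lost per term and the `|N(x)|` lost to `y = x` are both paid for by `δ² ≥ (d+1)n`
  have hX : (N.card * δ / 2 : ℝ) ≤ ∑ y ∈ B.erase x, ((N ∩ nbrA E A y).card : ℝ)
      - d * (B.erase x).card := by
    nlinarith [mul_le_mul_of_nonneg_right hδN (Nat.cast_nonneg δ)]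
  refine (pow_le_card_pow_mul_sum_choose (B.erase x) (fun y => (N ∩ nbrA E A y).card) hd
    (by positivity) hX).trans ?_
  gcongr

/-- Let `d ≥ 3`, `c > 0`. In a bipartite graph with parts of size at most `n/2` and
minimum degree `δ ≥ c n^{1-1/d}`, for every `x ∈ B` we have
`∑_{y ∈ B \ {x}} C(|N(x) ∩ N(y)|, d) ≥ c' |N(x)|^d`, for large `n`. -/
theorem stmt_8 (d : ℕ) (hd : 3 ≤ d) (c : ℝ) (hc : 0 < c) :
    ∃ c' : ℝ, 0 < c' ∧ ∃ n₀ : ℕ, ∀ n ≥ n₀,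
      ∀ (α β : Type) [DecidableEq α] [DecidableEq β]
        (E : α → β → Prop) [∀ a b, Decidable (E a b)] (A : Finset α) (B : Finset β)
        (δ : ℕ),
        (A.card : ℝ) ≤ n / 2 → (B.card : ℝ) ≤ n / 2 →
        c * (n : ℝ) ^ (1 - 1 / (d : ℝ)) ≤ (δ : ℝ) →
        (∀ a ∈ A, δ ≤ (nbrB E B a).card) → (∀ b ∈ B, δ ≤ (nbrA E A b).card) →
        ∀ x ∈ B,
          c' * ((nbrA E A x).card : ℝ) ^ d
            ≤ ∑ y ∈ B.erase x, (((nbrA E A x ∩ nbrA E A y).card.choose d : ℕ) : ℝ) := by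
  obtain ⟨n₀, hn₀⟩ := eventually_atTop.1 ((eventually_mul_le_sq_rpow (d := d) (by omega) hc
    (d + 1)).and (eventually_gt_atTop 0))
  refine ⟨c ^ d / (2 * d !), by positivity, n₀, fun n hn α β _ _ E _ A B δ hA hB hδ hdegA hdegB
    x hx => ?_⟩
  obtain ⟨hδsq, hn_pos⟩ := hn₀ n hn
  have hδpow : c ^ d * (n : ℝ) ^ (d - 1) ≤ δ ^ d := by
    rw [← rpow_one_sub_inv_pow (Nat.cast_nonneg n) (by omega), ← mul_pow]
    exact pow_le_pow_left₀ (by positivity) hδ d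
  have hjensen := pow_card_nbrA_mul_le_sum_choose_inter E (by omega) hA hB
    (hδsq.trans (pow_le_pow_left₀ (by positivity) hδ 2)) hdegA hdegB hx
  set R := ((nbrA E A x).card : ℝ)
  set total := ∑ y ∈ B.erase x, (((nbrA E A x ∩ nbrA E A y).card.choose d : ℕ) : ℝ)
  have hscaled : (n : ℝ) ^ (d - 1) * (c ^ d * R ^ d) ≤ n ^ (d - 1) * (2 * d ! * total) :=
    calc (n : ℝ) ^ (d - 1) * (c ^ d * R ^ d) = c ^ d * n ^ (d - 1) * R ^ d := by ring
      _ ≤ δ ^ d * R ^ d := by gcongr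
      _ = 2 ^ d * (R * δ / 2) ^ d := by rw [div_pow, mul_pow]; field_simp
      _ ≤ 2 ^ d * ((n / 2) ^ (d - 1) * (d ! * total)) := by gcongr
      _ = n ^ (d - 1) * (2 * d ! * total) := by
        rw [div_pow, ← Nat.sub_add_cancel (by omega : 1 ≤ d), pow_succ, Nat.add_sub_cancel]
        field_simp
  rw [div_mul_eq_mul_div, div_le_iff₀ (by positivity)]
  linarith [le_of_mul_le_mul_left hscaled (by positivity)]
end

section
/- Let $G$ be a bipartite graph with parts $A$ and $B$, let $x \in B$, and let $d < r$. Suppose there is no set $R \subseteq N(x)$ of size $r$ such that every $d$-subset $T$ of $R$ satisfies $|N(T)| \ge r$. Then, with $\ell = \ell(r,d)$ the Ramsey number guaranteeing a monochromatic $r$-set in any $3$-coloring of $d$-subsets of an $\ell$-set, every $\ell$-element subset $L \subseteq N(x) \cap N(y)$ (for any $y \in B \setminus \{x\}$) contains an $r$-set $R$ such that every $d$-subset $T \subseteq R$ satisfies $1 < |N(T)| < r$. -/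
open Finset

/-- Suppose no `r`-subset `R ⊆ N(x)` has all its `d`-subsets with at least `r` common
neighbors, and let `ℓ` satisfy the Ramsey property for 3-colorings of `d`-subsets.
Then for every `y ∈ B \ {x}`, every `ℓ`-subset `L ⊆ N(x) ∩ N(y)` contains an `r`-set `R`
all of whose `d`-subsets `T` satisfy `1 < |N(T)| < r`. -/
theorem stmt_11 {α β : Type} [DecidableEq α] [DecidableEq β]
    (E : α → β → Prop) [∀ a b, Decidable (E a b)] (A : Finset α) (B : Finset β)
    (x : β) (hx : x ∈ B) (d r ℓ : ℕ) (hd : 1 ≤ d) (hdr : d < r)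
    (hRam : ∀ (L : Finset α), L.card = ℓ → ∀ χ : Finset α → Fin 3,
      ∃ R ⊆ L, R.card = r ∧ ∃ color : Fin 3, ∀ T ⊆ R, T.card = d → χ T = color)
    (hno : ¬ ∃ R ⊆ nbrA E A x, R.card = r ∧
      ∀ T ⊆ R, T.card = d → r ≤ (commonNbr E B T).card) :
    ∀ y ∈ B, y ≠ x → ∀ L ⊆ nbrA E A x ∩ nbrA E A y, L.card = ℓ →
      ∃ R ⊆ L, R.card = r ∧ ∀ T ⊆ R, T.card = d →
        1 < (commonNbr E B T).card ∧ (commonNbr E B T).card < r := by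
  intro y hy hyx L hL hLcard
  classical
  set χ : Finset α → Fin 3 := fun T =>
    if r ≤ (commonNbr E B T).card then 2 else if (commonNbr E B T).card ≤ 1 then 0 else 1
    with hχ
  obtain ⟨R, hRL, hRcard, color, hcolor⟩ := hRam L hLcard χ
  -- every d-subset T of R has x and y as common neighbors
  have hxy : ∀ T ⊆ R, T.card = d → 1 < (commonNbr E B T).card := by
    intro T hTR hTd
    have hTL : T ⊆ L := hTR.trans hRL
    have hxmem : x ∈ commonNbr E B T := by
      simp only [commonNbr, mem_filter]
      exact ⟨hx, fun a ha => (mem_filter.mp ((mem_inter.mp (hL (hTL ha))).1)).2⟩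
    have hymem : y ∈ commonNbr E B T := by
      simp only [commonNbr, mem_filter]
      exact ⟨hy, fun a ha => (mem_filter.mp ((mem_inter.mp (hL (hTL ha))).2)).2⟩
    have : ({x, y} : Finset β) ⊆ commonNbr E B T := by
      intro z hz; rcases mem_insert.mp hz with h|h
      · exact h ▸ hxmem
      · exact (mem_singleton.mp h) ▸ hymem
    calc 1 < ({x, y} : Finset β).card := by
            rw [card_insert_of_notMem (by simp [hyx.symm]), card_singleton]
            omega
         _ ≤ _ := card_le_card this
  -- there exists a d-subset of R
  obtain ⟨T₀, hT₀R, hT₀card⟩ := R.exists_subset_card_eq (n := d) (by omega)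
  have hc0 : color ≠ 0 := by
    intro h
    have := hcolor T₀ hT₀R hT₀card
    rw [h, hχ] at this
    simp only at this
    split_ifs at this with h1 h2
    · exact absurd this (by decide)
    · exact absurd (hxy T₀ hT₀R hT₀card) (by omega)
    · exact absurd this (by decide)
  have hc2 : color ≠ 2 := by
    intro h
    apply hno
    refine ⟨R, hRL.trans (fun a ha => (mem_inter.mp (hL ha)).1), hRcard, ?_⟩
    intro T hTR hTd
    have := hcolor T hTR hTd
    rw [h, hχ] at this
    simp only at this
    split_ifs at this with h1 h2
    · exact h1
    · exact absurd this (by decide)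
    · exact absurd this (by decide)
  refine ⟨R, hRL, hRcard, fun T hTR hTd => ?_⟩
  have := hcolor T hTR hTd
  rw [hχ] at this
  simp only at this
  split_ifs at this with h1 h2
  · exact absurd (this ▸ hc2) (fun h => h rfl)
  · exact absurd (this ▸ hc0) (fun h => h rfl)
  · exact ⟨by omega, by omega⟩
end

section
/- Let $G$ be a bipartite graph with parts $A$ and $B$, let $x \in B$, and fix constants $d < q$. Suppose that for every $y \in B \setminus \{x\}$ we have $|N(y) \cap N(x)| = o(|N(x)|)$. Then the number of $q$-element sets $Q \subseteq N(x)$ satisfying: (i) every $d$-subset $T \subseteq Q$ has $N(T) \setminus \{x\} \ne \emptyset$, and (ii) there exists a $(d-1)$-subset $S \subseteq Q$ with $|N(S)| < q$, is $o(|N(x)|^q)$ as $|N(x)| \to \infty$. -/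
open Finset

/-- Counting step: if every `y ≠ x` has `|N(y) ∩ N(x)| = o(|N(x)|)`, then the number of
`q`-subsets `Q ⊆ N(x)` such that every `d`-subset of `Q` has a common neighbor other than
`x` and some `(d-1)`-subset `S ⊆ Q` has `|N(S)| < q` is `o(|N(x)|^q)` as `|N(x)| → ∞`. -/
theorem stmt_13 {α β : Type} [DecidableEq α] [DecidableEq β]
    (d q : ℕ) (hd : 1 ≤ d) (hdq : d < q)
    (E : ℕ → α → β → Prop) [∀ n a b, Decidable (E n a b)]
    (A : ℕ → Finset α) (B : ℕ → Finset β) (x : ℕ → β) (hx : ∀ n, x n ∈ B n)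
    (hsmall : ∀ ε : ℝ, 0 < ε → ∃ n₀ : ℕ, ∀ n ≥ n₀, ∀ y ∈ B n, y ≠ x n →
      ((nbrA (E n) (A n) y ∩ nbrA (E n) (A n) (x n)).card : ℝ)
        ≤ ε * ((nbrA (E n) (A n) (x n)).card : ℝ))
    (hinf : Filter.Tendsto (fun n => (nbrA (E n) (A n) (x n)).card)
      Filter.atTop Filter.atTop) :
    ∀ ε : ℝ, 0 < ε → ∃ n₀ : ℕ, ∀ n ≥ n₀,
      (((nbrA (E n) (A n) (x n)).powerset.filter (fun Q => Q.card = q ∧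
          (∀ T ∈ Q.powerset, T.card = d →
            ((commonNbr (E n) (B n) T).erase (x n)).Nonempty) ∧
          (∃ S ∈ Q.powerset, S.card = d - 1 ∧
            (commonNbr (E n) (B n) S).card < q))).card : ℝ)
        ≤ ε * ((nbrA (E n) (A n) (x n)).card : ℝ) ^ q := by
  intro ε hε
  have hq : (0:ℝ) < q := by exact_mod_cast Nat.lt_of_lt_of_le (Nat.lt_of_lt_of_le Nat.zero_lt_one hd) hdq.le
  set ε' : ℝ := min ε 1 / q with hε'def
  have hε'pos : 0 < ε' := div_pos (lt_min hε one_pos) hq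
  obtain ⟨n₀, hn₀⟩ := hsmall ε' hε'pos
  refine ⟨n₀, fun n hn => ?_⟩
  set N := nbrA (E n) (A n) (x n) with hNdef
  set m := q - d + 1 with hm
  have hmd : d - 1 + m = q := by omega
  set U : Finset α → Finset α := fun S =>
    ((commonNbr (E n) (B n) S).erase (x n)).biUnion
      (fun y => nbrA (E n) (A n) y ∩ N) with hUdef
  set Sset := (N.powersetCard (d-1)).filter
      (fun S => (commonNbr (E n) (B n) S).card < q) with hSsetdef
  -- the subset claim
  have hsub : N.powerset.filter (fun Q => Q.card = q ∧
          (∀ T ∈ Q.powerset, T.card = d →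
            ((commonNbr (E n) (B n) T).erase (x n)).Nonempty) ∧
          (∃ S ∈ Q.powerset, S.card = d - 1 ∧
            (commonNbr (E n) (B n) S).card < q))
      ⊆ Sset.biUnion (fun S => ((U S).powersetCard m).image (fun R => S ∪ R)) := by
    intro Q hQ
    simp only [mem_filter, mem_powerset] at hQ
    obtain ⟨hQN, hQcard, hT, S, hSQ, hScard, hSnbr⟩ := hQ

    refine mem_biUnion.2 ⟨S, ?_, ?_⟩
    · exact mem_filter.2 ⟨mem_powersetCard.2 ⟨hSQ.trans hQN, hScard⟩, hSnbr⟩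
    · refine mem_image.2 ⟨Q \ S, ?_, by rw [union_sdiff_of_subset hSQ]⟩
      refine mem_powersetCard.2 ⟨?_, ?_⟩
      · intro a ha
        obtain ⟨haQ, haS⟩ := mem_sdiff.1 ha
        have hTcard : (insert a S).card = d := by
          rw [card_insert_of_notMem haS, hScard]; omega
        obtain ⟨y, hy⟩ := hT (insert a S) (insert_subset haQ hSQ) hTcard
        have hyne : y ≠ x n := (mem_erase.1 hy).1
        have hyT : y ∈ commonNbr (E n) (B n) (insert a S) := (mem_erase.1 hy).2
        obtain ⟨hyB, hyE⟩ := mem_filter.1 hyT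
        refine mem_biUnion.2 ⟨y, mem_erase.2 ⟨hyne, mem_filter.2 ⟨hyB, fun a' ha' => hyE a' (mem_insert_of_mem ha')⟩⟩, ?_⟩
        exact mem_inter.2 ⟨mem_filter.2 ⟨(mem_filter.1 (hQN haQ)).1, hyE a (mem_insert_self a S)⟩, hQN haQ⟩
      · rw [card_sdiff_of_subset hSQ, hQcard, hScard]; omega
  -- cardinality estimates, over ℝ
  have hUcard : ∀ S ∈ Sset, ((U S).card : ℝ) ≤ q * ε' * N.card := by
    intro S hS
    have hlt : (commonNbr (E n) (B n) S).card < q := (mem_filter.1 hS).2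
    calc ((U S).card : ℝ)
        ≤ ∑ y ∈ (commonNbr (E n) (B n) S).erase (x n),
            ((nbrA (E n) (A n) y ∩ N).card : ℝ) := by
          exact_mod_cast Nat.cast_le.2 (card_biUnion_le)
      _ ≤ ∑ y ∈ (commonNbr (E n) (B n) S).erase (x n), ε' * N.card := by
          refine Finset.sum_le_sum fun y hy => ?_
          have hyB : y ∈ B n := (mem_filter.1 (mem_of_mem_erase hy)).1
          exact hn₀ n hn y hyB (ne_of_mem_erase hy)
      _ = ((commonNbr (E n) (B n) S).erase (x n)).card * (ε' * N.card) := by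
          rw [Finset.sum_const, nsmul_eq_mul]
      _ ≤ q * (ε' * N.card) := by
          refine mul_le_mul_of_nonneg_right ?_ (by positivity)
          exact_mod_cast Nat.cast_le.2 ((card_erase_le.trans hlt.le))
      _ = q * ε' * N.card := by ring
  have hbound : ∀ S ∈ Sset, (((U S).powersetCard m).card : ℝ) ≤ (q * ε' * (N.card:ℝ)) ^ m := by
    intro S hS
    calc (((U S).powersetCard m).card : ℝ)
        ≤ ((U S).card : ℝ) ^ m := by
          rw [card_powersetCard]
          exact_mod_cast Nat.choose_le_pow (U S).card m
      _ ≤ (q * ε' * (N.card:ℝ)) ^ m :=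
          pow_le_pow_left₀ (by positivity) (hUcard S hS) m
  have hScount : ((Sset.card : ℝ)) ≤ (N.card : ℝ) ^ (d-1) := by
    calc ((Sset.card : ℝ)) ≤ ((N.powersetCard (d-1)).card : ℝ) := by
          exact_mod_cast Nat.cast_le.2 (card_filter_le _ _)
      _ = (N.card.choose (d-1) : ℝ) := by rw [card_powersetCard]
      _ ≤ (N.card : ℝ) ^ (d-1) := by exact_mod_cast Nat.choose_le_pow N.card (d-1)
  calc ((N.powerset.filter _).card : ℝ)
      ≤ ((Sset.biUnion (fun S => ((U S).powersetCard m).image (fun R => S ∪ R))).card : ℝ) := by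
        exact_mod_cast Nat.cast_le.2 (card_le_card hsub)
    _ ≤ ∑ S ∈ Sset, ((((U S).powersetCard m).image (fun R => S ∪ R)).card : ℝ) := by
        exact_mod_cast Nat.cast_le.2 card_biUnion_le
    _ ≤ ∑ S ∈ Sset, (q * ε' * (N.card:ℝ)) ^ m := by
        refine Finset.sum_le_sum fun S hS => ?_
        exact le_trans (by exact_mod_cast Nat.cast_le.2 (card_image_le)) (hbound S hS)
    _ = Sset.card * (q * ε' * (N.card:ℝ)) ^ m := by rw [Finset.sum_const, nsmul_eq_mul]
    _ ≤ (N.card : ℝ) ^ (d-1) * (q * ε' * (N.card:ℝ)) ^ m := by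
        refine mul_le_mul_of_nonneg_right hScount (by positivity)
    _ = (q * ε') ^ m * ((N.card : ℝ) ^ (d-1) * (N.card:ℝ) ^ m) := by
        rw [mul_pow]; ring
    _ = (q * ε') ^ m * (N.card : ℝ) ^ q := by rw [← pow_add, hmd]
    _ ≤ ε * (N.card : ℝ) ^ q := by
        refine mul_le_mul_of_nonneg_right ?_ (by positivity)
        have hqε' : (q:ℝ) * ε' = min ε 1 := by
          rw [hε'def, mul_div_cancel₀]; exact ne_of_gt hq
        rw [hqε']
        calc (min ε 1) ^ m ≤ min ε 1 := by
              refine pow_le_of_le_one (le_min hε.le zero_le_one) (min_le_right _ _) (by omega)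
          _ ≤ ε := min_le_left _ _
end

section
/- Let $G$ be a bipartite graph with parts $A$ and $B$, let $x \in B$, and fix constants $d < q$. Suppose that for every $y \in B \setminus \{x\}$ we have $|N(y) \cap N(x)| = o(|N(x)|)$. Then the number of $q$-element sets $Q \subseteq N(x)$ such that every $d$-subset $T \subseteq Q$ satisfies $|N(T)| < q$ and such that the sets $N(T) \setminus \{x\}$, over distinct $d$-subsets $T \subseteq Q$, are NOT pairwise disjoint, is $o(|N(x)|^q)$ as $|N(x)| \to \infty$. -/
open Finset

/-!
A set `Q` that is counted contains two distinct `d`-subsets `T ≠ T'` with a common neighbour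
`b ≠ x`. Then `Q` is recovered from `T`, from `b ∈ N(T) \ {x}` (fewer than `q` choices, since
`|N(T)| < q`), from a vertex `a ∈ T' \ T`, which lies in `N(b) ∩ N(x)` and so has only `o(|N(x)|)`
choices, and from the remaining `q - d - 1` vertices of `Q`. With `m = |N(x)|` this gives at most
`m ^ d * q * o(m) * m ^ (q - d - 1) = o(m ^ q)` sets.
-/

section Counting

variable {α β : Type} [DecidableEq α] [DecidableEq β] (E : α → β → Prop)
  [∀ a b, Decidable (E a b)] (A : Finset α) (B : Finset β) (x : β) (d q : ℕ)

def overlappingSets : Finset (Finset α) :=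
  (nbrA E A x).powerset.filter fun Q => Q.card = q ∧
    (∀ T ∈ Q.powerset, T.card = d → (commonNbr E B T).card < q) ∧
    ¬ (∀ T ∈ Q.powerset, ∀ T' ∈ Q.powerset, T.card = d → T'.card = d → T ≠ T' →
      (commonNbr E B T).erase x ∩ (commonNbr E B T').erase x = ∅)

variable {E A B x d q}

theorem exists_of_mem_overlappingSets {Q : Finset α} (hQ : Q ∈ overlappingSets E A B x d q) :
    Q ⊆ nbrA E A x ∧ #Q = q ∧ ∃ T ⊆ Q, #T = d ∧ #(commonNbr E B T) < q ∧
      ∃ b ∈ (commonNbr E B T).erase x, ∃ a ∈ Q \ T, E a b := by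
  simp only [overlappingSets, mem_filter, mem_powerset] at hQ
  obtain ⟨hQN, hQq, hlt, hne⟩ := hQ
  push Not at hne
  obtain ⟨T, hT, T', hT', hTd, hT'd, hTT', b, hb⟩ := hne
  simp only [mem_inter, mem_erase] at hb
  obtain ⟨⟨hbx, hbT⟩, -, hbT'⟩ := hb
  obtain ⟨a, ha⟩ : (T' \ T).Nonempty := sdiff_nonempty.mpr fun hsub =>
    hTT' (eq_of_subset_of_card_le hsub (by omega)).symm
  rw [mem_sdiff] at ha
  have hab : E a b := (mem_filter.mp hbT').2 a ha.1
  exact ⟨hQN, hQq, T, hT, hTd, hlt T hT hTd, b, mem_erase.mpr ⟨hbx, hbT⟩, a,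
    mem_sdiff.mpr ⟨hT' ha.1, ha.2⟩, hab⟩

theorem overlappingSets_subset_biUnion (hdq : d < q) :
    overlappingSets E A B x d q ⊆
      (((nbrA E A x).powersetCard d).filter fun T => #(commonNbr E B T) < q).biUnion fun T =>
        ((commonNbr E B T).erase x).biUnion fun b =>
          (nbrA E A b ∩ nbrA E A x).biUnion fun a =>
            ((nbrA E A x).powersetCard (q - d - 1)).image fun R => insert a T ∪ R := by
  intro Q hQ
  obtain ⟨hQN, hQq, T, hTQ, hTd, hTlt, b, hb, a, ha, hab⟩ := exists_of_mem_overlappingSets hQ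
  rw [mem_sdiff] at ha
  have haT : insert a T ⊆ Q := insert_subset ha.1 hTQ
  have haN : a ∈ nbrA E A x := hQN ha.1
  simp only [mem_biUnion, mem_filter, mem_powersetCard, mem_image, mem_inter]
  refine ⟨T, ⟨⟨hTQ.trans hQN, hTd⟩, hTlt⟩, b, hb, a,
    ⟨mem_filter.mpr ⟨(mem_filter.mp haN).1, hab⟩, haN⟩, Q \ insert a T,
    ⟨sdiff_subset.trans hQN, ?_⟩, union_sdiff_of_subset haT⟩
  rw [card_sdiff_of_subset haT, card_insert_of_notMem ha.2]
  omega

theorem card_overlappingSets_le (hdq : d < q) (k : ℕ)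
    (hk : ∀ y ∈ B, y ≠ x → #(nbrA E A y ∩ nbrA E A x) ≤ k) :
    #(overlappingSets E A B x d q) ≤
      (#(nbrA E A x)).choose d * (q * (k * (#(nbrA E A x)).choose (q - d - 1))) := by
  refine (card_le_card (overlappingSets_subset_biUnion hdq)).trans <|
    (card_biUnion_le_card_mul _ _ (q * _) fun T hT => ?_).trans <|
      Nat.mul_le_mul_right _ ((card_filter_le _ _).trans (card_powersetCard _ _).le)
  have hTq : #((commonNbr E B T).erase x) ≤ q := card_erase_le.trans (mem_filter.mp hT).2.le
  refine (card_biUnion_le_card_mul _ _ (k * _) fun b hb => ?_).trans (Nat.mul_le_mul_right _ hTq)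
  obtain ⟨hbx, hbT⟩ := mem_erase.mp hb
  refine (card_biUnion_le_card_mul _ _ _ fun a _ => ?_).trans
    (Nat.mul_le_mul_right _ (hk b (mem_filter.mp hbT).1 hbx))
  exact card_image_le.trans (card_powersetCard _ _).le

end Counting

theorem stmt_14_general {α β : Type} [DecidableEq α] [DecidableEq β]
    (d q : ℕ) (hdq : d < q)
    (E : ℕ → α → β → Prop) [∀ n a b, Decidable (E n a b)]
    (A : ℕ → Finset α) (B : ℕ → Finset β) (x : ℕ → β)
    (hsmall : ∀ ε : ℝ, 0 < ε → ∃ n₀ : ℕ, ∀ n ≥ n₀, ∀ y ∈ B n, y ≠ x n →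
      ((nbrA (E n) (A n) y ∩ nbrA (E n) (A n) (x n)).card : ℝ)
        ≤ ε * ((nbrA (E n) (A n) (x n)).card : ℝ)) :
    ∀ ε : ℝ, 0 < ε → ∃ n₀ : ℕ, ∀ n ≥ n₀,
      (((nbrA (E n) (A n) (x n)).powerset.filter (fun Q => Q.card = q ∧
          (∀ T ∈ Q.powerset, T.card = d → (commonNbr (E n) (B n) T).card < q) ∧
          ¬ (∀ T ∈ Q.powerset, ∀ T' ∈ Q.powerset, T.card = d → T'.card = d → T ≠ T' →
            (commonNbr (E n) (B n) T).erase (x n) ∩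
              (commonNbr (E n) (B n) T').erase (x n) = ∅))).card : ℝ)
        ≤ ε * ((nbrA (E n) (A n) (x n)).card : ℝ) ^ q := by
  intro ε hε
  have hq : (0 : ℝ) < q := by exact_mod_cast (Nat.zero_le d).trans_lt hdq
  obtain ⟨n₀, hn₀⟩ := hsmall (ε / q) (by positivity)
  refine ⟨n₀, fun n hn => ?_⟩
  set m := #(nbrA (E n) (A n) (x n))
  set k := ⌊ε / q * m⌋₊
  have hcount := card_overlappingSets_le (E := E n) (A := A n) (B := B n) (x := x n) hdq k
    fun y hy hyx => Nat.le_floor (hn₀ n hn y hy hyx)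
  have hk : (k : ℝ) ≤ ε / q * m := Nat.floor_le (by positivity)
  calc (#(overlappingSets (E n) (A n) (B n) (x n) d q) : ℝ)
      ≤ m ^ d * (q * (k * m ^ (q - d - 1))) := by
        refine (Nat.cast_le.mpr hcount).trans ?_
        push_cast
        gcongr <;> exact_mod_cast Nat.choose_le_pow _ _
    _ ≤ m ^ d * (q * (ε / q * m * m ^ (q - d - 1))) := by gcongr
    _ = ε * m ^ q := by
        obtain ⟨r, rfl⟩ : ∃ r, q = d + 1 + r := ⟨q - d - 1, by omega⟩
        rw [show d + 1 + r - d - 1 = r by omega]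
        field_simp
        ring

/-- Counting step: if every `y ≠ x` has `|N(y) ∩ N(x)| = o(|N(x)|)`, then the number of
`q`-subsets `Q ⊆ N(x)` such that every `d`-subset `T ⊆ Q` has `|N(T)| < q` and the sets
`N(T) \ {x}` over distinct `d`-subsets are not pairwise disjoint is `o(|N(x)|^q)` as
`|N(x)| → ∞`. -/
theorem stmt_14 {α β : Type} [DecidableEq α] [DecidableEq β]
    (d q : ℕ) (hd : 1 ≤ d) (hdq : d < q)
    (E : ℕ → α → β → Prop) [∀ n a b, Decidable (E n a b)]
    (A : ℕ → Finset α) (B : ℕ → Finset β) (x : ℕ → β) (hx : ∀ n, x n ∈ B n)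
    (hsmall : ∀ ε : ℝ, 0 < ε → ∃ n₀ : ℕ, ∀ n ≥ n₀, ∀ y ∈ B n, y ≠ x n →
      ((nbrA (E n) (A n) y ∩ nbrA (E n) (A n) (x n)).card : ℝ)
        ≤ ε * ((nbrA (E n) (A n) (x n)).card : ℝ))
    (hinf : Filter.Tendsto (fun n => (nbrA (E n) (A n) (x n)).card)
      Filter.atTop Filter.atTop) :
    ∀ ε : ℝ, 0 < ε → ∃ n₀ : ℕ, ∀ n ≥ n₀,
      (((nbrA (E n) (A n) (x n)).powerset.filter (fun Q => Q.card = q ∧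
          (∀ T ∈ Q.powerset, T.card = d → (commonNbr (E n) (B n) T).card < q) ∧
          ¬ (∀ T ∈ Q.powerset, ∀ T' ∈ Q.powerset, T.card = d → T'.card = d → T ≠ T' →
            (commonNbr (E n) (B n) T).erase (x n) ∩
              (commonNbr (E n) (B n) T').erase (x n) = ∅))).card : ℝ)
        ≤ ε * ((nbrA (E n) (A n) (x n)).card : ℝ) ^ q :=
  stmt_14_general d q hdq E A B x hsmall
end
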